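/- Let P be a finite poset on [d] whose Hasse diagram is a forest (acyclic poset). Then for every edge partition ℓ of the cover relations of P, every vertex of the order-chain polytope OC_ℓ(P) = O(P'_ℓ) ∩ C(P''_ℓ) has integer coordinates (in fact, all coordinates in {0,1}). -/

import Mathlib

/-- `b` covers `a` in the partial order `r`. -/
def covRel {α : Type*} (r : α → α → Prop) (a b : α) : Prop :=
  r a b ∧ a ≠ b ∧ ∀ c, r a c → r c b → c = a ∨ c = b

/-- The partial order generated by a set of (cover) relations `e`. -/
def genOrd {d : ℕ} (e : Fin d → Fin d → Prop) : Fin d → Fin d → Prop :=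
  Relation.ReflTransGen e

/-- The order polytope of a partial order `r` on `Fin d`. -/
def orderPolytope {d : ℕ} (r : Fin d → Fin d → Prop) : Set (Fin d → ℝ) :=
  {x | (∀ i, 0 ≤ x i ∧ x i ≤ 1) ∧ ∀ i j, r i j → x j ≤ x i}

/-- The chain polytope of a partial order `r` on `Fin d`. -/
def chainPolytope {d : ℕ} (r : Fin d → Fin d → Prop) : Set (Fin d → ℝ) :=
  {x | (∀ i, 0 ≤ x i) ∧
    ∀ C : Finset (Fin d), IsMaxChain r (C : Set (Fin d)) → ∑ i ∈ C, x i ≤ 1}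

/-- The Hasse diagram of `r`, as an undirected simple graph. -/
def hasseGraph {d : ℕ} (r : Fin d → Fin d → Prop) : SimpleGraph (Fin d) where
  Adj a b := (covRel r a b ∨ covRel r b a) ∧ a ≠ b
  symm := ⟨fun _ _ h => ⟨h.1.symm, h.2.symm⟩⟩
  loopless := ⟨fun _ h => h.2 rfl⟩


/-!
Picture element `i` of `P` as the interval `[p i - v i, p i]` of length `v i`, with `p` chosen so
that along every chain-edge `a ⋖ b` the interval of `b` sits directly on top of that of `a`, and
along every order-edge the two intervals have the same top end. Such a `p` exists because the Hasse
diagram is a forest, so every edge is a bridge and edge differences can be prescribed freely. The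
intervals of a maximal chain of `P''` then tile an interval of length `∑ v`, so a tight chain
constraint joins two endpoints that differ by exactly `1`, and tight order and box constraints also
only identify endpoints modulo `1`. Hence for any `1`-periodic `g` the direction
`w i = g (p i) - g (p i - v i)` keeps every tight constraint tight, and `v ± ε w` stays in the
polytope. If `0 < v k < 1`, taking `g` to be the indicator of `p k + ℤ` gives `w k = 1`, so `v` is
not a vertex.
-/

open Finset Filter Topology Relation

section Perturbation

lemma eventually_add_mul_le {c s b : ℝ} (hc : c ≤ b) (hs : c = b → s = 0) :
    ∀ᶠ η in 𝓝 (0 : ℝ), c + η * s ≤ b := by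
  rcases hc.lt_or_eq with hlt | heq
  · have hcont : Tendsto (fun η : ℝ => c + η * s) (𝓝 0) (𝓝 c) :=
      (by fun_prop : Continuous fun η : ℝ => c + η * s).tendsto' 0 c (by simp)
    exact (hcont.eventually (gt_mem_nhds hlt)).mono fun _ h => h.le
  · exact Eventually.of_forall fun η => by simp [hs heq, heq]

lemma notMem_extremePoints_of_eventually_add_smul_mem {E : Type*} [AddCommGroup E]
    [Module ℝ E] {S : Set E} {v w : E} (hw : w ≠ 0)
    (h : ∀ᶠ η in 𝓝 (0 : ℝ), v + η • w ∈ S) : v ∉ S.extremePoints ℝ := by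
  intro hv
  obtain ⟨ε, hε, hball⟩ := Metric.eventually_nhds_iff.mp h
  have hmem : ∀ η : ℝ, |η| = ε / 2 → v + η • w ∈ S := fun η hη =>
    hball (by rw [Real.dist_eq, sub_zero, hη]; linarith)
  have hplus := hmem (ε / 2) (abs_of_pos (by linarith))
  have hminus : v - (ε / 2) • w ∈ S := by
    rw [sub_eq_add_neg, ← neg_smul]
    exact hmem (-(ε / 2)) (by rw [abs_neg, abs_of_pos (by linarith)])
  have heq := hv.2 hplus hminus (mem_openSegment_add_sub v ((ε / 2) • w))
  rw [add_eq_left, smul_eq_zero] at heq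
  exact heq.elim (by intro h; linarith) hw

end Perturbation

section Chain

variable {α : Type*} {s : α → α → Prop}

instance IsPreorder.flip [IsPreorder α s] : IsPreorder α (flip s) where
  refl a := refl_of s a
  trans _ _ _ hab hbc := trans_of s hbc hab

lemma IsChain.exists_greatest_of_finset [IsPreorder α s] {C : Finset α}
    (hC : IsChain s (C : Set α)) (hne : C.Nonempty) : ∃ t ∈ C, ∀ c ∈ C, s c t := by
  classical
  obtain ⟨t, ht, hmax⟩ := C.exists_max_image (fun x => #{c ∈ C | s c x}) hne
  refine ⟨t, ht, fun c hc => by_contra fun hct => ?_⟩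
  have htc : s t c := (hC hc ht fun h => hct (h ▸ refl_of s c)).resolve_left hct
  have hlt : #{c' ∈ C | s c' t} < #{c' ∈ C | s c' c} := by
    refine card_lt_card ⟨fun x hx => ?_, fun hsub => hct ?_⟩
    · simp only [mem_filter] at hx ⊢
      exact ⟨hx.1, trans_of s hx.2 htc⟩
    · exact (mem_filter.mp (hsub (mem_filter.mpr ⟨hc, refl_of s c⟩))).2
  exact (hmax c hc).not_gt hlt

lemma IsChain.exists_least_of_finset [IsPreorder α s] {C : Finset α}
    (hC : IsChain s (C : Set α)) (hne : C.Nonempty) : ∃ b ∈ C, ∀ c ∈ C, s b c :=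
  hC.symm.exists_greatest_of_finset hne

lemma IsMaxChain.exists_covRel [IsPartialOrder α s] {C : Finset α}
    (hC : IsMaxChain s (C : Set α)) {b x : α} (hb : b ∈ C) (hbC : ∀ c ∈ C, s b c)
    (hx : x ∈ C) (hxb : x ≠ b) : ∃ y ∈ C, covRel s y x := by
  classical
  have hD : ({c ∈ C | s c x ∧ c ≠ x} : Finset α).Nonempty :=
    ⟨b, mem_filter.mpr ⟨hb, hbC x hx, hxb.symm⟩⟩
  obtain ⟨y, hyD, hyD'⟩ :=
    (hC.1.mono (coe_subset.mpr (filter_subset _ C))).exists_greatest_of_finset hD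
  simp only [mem_filter, and_imp] at hyD hyD'
  refine ⟨y, hyD.1, hyD.2.1, hyD.2.2, fun c hyc hcx => ?_⟩
  by_cases hcx' : c = x
  · exact Or.inr hcx'
  have hchain : IsChain s (insert c (C : Set α)) := hC.1.insert fun z hz _ => by
    rcases eq_or_ne z x with rfl | hzx
    · exact Or.inl hcx
    rcases hC.1 hz hx hzx with hzx' | hxz
    · exact Or.inr (trans_of s (hyD' z hz hzx' hzx) hyc)
    · exact Or.inl (trans_of s hcx hxz)
  have hcC : c ∈ C := Set.insert_eq_self.mp (hC.2 hchain (Set.subset_insert _ _)).symm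
  exact Or.inl (antisymm (hyD' c hcC hcx hcx') hyc)

lemma IsChain.sum_sub_eq_of_covRel {M : Type*} [AddCommGroup M] [IsPartialOrder α s]
    {C : Finset α} (hC : IsChain s (C : Set α)) {F G : α → M}
    (hFG : ∀ x y, covRel s y x → G x = F y) {b : α} (hb : b ∈ C) (hbC : ∀ c ∈ C, s b c)
    (hcov : ∀ x ∈ C, x ≠ b → ∃ y ∈ C, covRel s y x) {t : α} (ht : t ∈ C)
    (htC : ∀ c ∈ C, s c t) : ∑ x ∈ C, (F x - G x) = F t - G b := by
  classical
  induction C using Finset.strongInduction generalizing t with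
  | H C ih =>
  by_cases htb : t = b
  · subst htb
    rw [eq_singleton_iff_unique_mem.mpr ⟨ht, fun c hc => antisymm (htC c hc) (hbC c hc)⟩,
      sum_singleton]
  obtain ⟨y, hy, hyt⟩ := hcov t ht htb
  have hcov' : ∀ x ∈ C.erase t, x ≠ b → ∃ z ∈ C.erase t, covRel s z x := by
    intro x hx hxb
    obtain ⟨z, hz, hzx⟩ := hcov x (mem_of_mem_erase hx) hxb
    refine ⟨z, mem_erase.mpr ⟨fun hzt => ?_, hz⟩, hzx⟩
    subst hzt
    exact ne_of_mem_erase hx (antisymm (htC x (mem_of_mem_erase hx)) hzx.1)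
  have hyC : ∀ c ∈ C.erase t, s c y := fun c hc => by
    obtain ⟨hct, hcC⟩ := mem_erase.mp hc
    rcases eq_or_ne c y with rfl | hcy
    · exact refl_of s c
    exact (hC hcC hy hcy).resolve_right
      fun hyc => hcy ((hyt.2.2 c hyc (htC c hcC)).resolve_right hct)
  have hrest := ih (C.erase t) (erase_ssubset ht) (hC.mono (by simp))
    (mem_erase.mpr ⟨Ne.symm htb, hb⟩) (fun c hc => hbC c (mem_of_mem_erase hc)) hcov'
    (mem_erase.mpr ⟨hyt.2.1, hy⟩) hyC
  rw [← add_sum_erase C _ ht, hrest, hFG t y hyt]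
  abel

lemma rel_of_covRel_reflTransGen {e : α → α → Prop} (he : ∀ a, ¬ e a a) {a b : α}
    (h : covRel (ReflTransGen e) a b) : e a b := by
  obtain ⟨hab, hne, hmin⟩ := h
  rcases hab.cases_head with rfl | ⟨m, ham, hmb⟩
  · exact absurd rfl hne
  rcases hmin m (.single ham) hmb with rfl | rfl
  · exact absurd ham (he _)
  · exact ham

lemma isPartialOrder_reflTransGen {r e : α → α → Prop} [IsPartialOrder α r]
    (he : ∀ a b, e a b → r a b) : IsPartialOrder α (ReflTransGen e) :=
  have hle : ReflTransGen e ≤ r := reflTransGen_eq_self (r := r) ▸ ReflTransGen.mono he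
  { (inferInstance : IsPreorder α (ReflTransGen e)) with
    antisymm := fun a b hab hba => antisymm (hle a b hab) (hle b a hba) }

end Chain

lemma SimpleGraph.IsAcyclic.exists_potential {V : Type*} [Fintype V] {G : SimpleGraph V}
    (hG : G.IsAcyclic) (δ : V → V → ℝ) :
    ∃ p : V → ℝ, ∀ a b, G.Adj a b → p b - p a = δ a b - δ b a := by
  classical
  -- `p j` sums `δ a b` over the pairs with `j` on the side of `b` of the bridge `ab`
  let side (e : V × V) (j : V) : Prop := (G.deleteEdges {s(e.1, e.2)}).Reachable e.2 j
  refine ⟨fun j => ∑ e : V × V, if side e j then δ e.1 e.2 else 0, fun x y hxy => ?_⟩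
  have hbridge := isBridge_iff.mp (isAcyclic_iff_forall_adj_isBridge.mp hG hxy)
  rw [← sum_sub_distrib, Fintype.sum_eq_add (x, y) (y, x) (by simp [hxy.ne])]
  · have hyx : ¬ (G.deleteEdges {s(y, x)}).Reachable x y := by
      rwa [Sym2.eq_swap]
    have hxy' : ¬ (G.deleteEdges {s(x, y)}).Reachable y x := fun h => hbridge h.symm
    simp [side, hyx, hxy', sub_eq_add_neg]
  · rintro ⟨a, b⟩ ⟨hxy', hyx'⟩
    have hadj : (G.deleteEdges {s(a, b)}).Adj x y := by
      simp only [SimpleGraph.deleteEdges_adj, Set.mem_singleton_iff, hxy, true_and]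
      rw [Sym2.eq_iff]
      rintro (⟨rfl, rfl⟩ | ⟨rfl, rfl⟩) <;> simp_all
    have hside : side (a, b) y ↔ side (a, b) x :=
      ⟨fun h => h.trans hadj.symm.reachable, fun h => h.trans hadj.reachable⟩
    simp [hside]

section OrderChainPolytope

variable {d : ℕ} {r : Fin d → Fin d → Prop} {ℓ : Fin d → Fin d → Bool}

def orderEdge (r : Fin d → Fin d → Prop) (ℓ : Fin d → Fin d → Bool) (a b : Fin d) :
    Prop :=
  covRel r a b ∧ ℓ a b = true

def chainEdge (r : Fin d → Fin d → Prop) (ℓ : Fin d → Fin d → Bool) (a b : Fin d) :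
    Prop :=
  covRel r a b ∧ ℓ a b = false

def orderChainPolytope (r : Fin d → Fin d → Prop) (ℓ : Fin d → Fin d → Bool) :
    Set (Fin d → ℝ) :=
  orderPolytope (genOrd (orderEdge r ℓ)) ∩ chainPolytope (genOrd (chainEdge r ℓ))

lemma exists_stacking_potential [IsPartialOrder (Fin d) r] (hforest : (hasseGraph r).IsAcyclic)
    (ℓ : Fin d → Fin d → Bool) (v : Fin d → ℝ) :
    ∃ p : Fin d → ℝ, (∀ a b, chainEdge r ℓ a b → p b = p a + v b) ∧
      (∀ a b, orderEdge r ℓ a b → p b = p a) := by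
  classical
  obtain ⟨p, hp⟩ := hforest.exists_potential fun a b => if chainEdge r ℓ a b then v b else 0
  have hadj : ∀ a b, covRel r a b → (hasseGraph r).Adj a b := fun a b h => ⟨Or.inl h, h.2.1⟩
  have hback : ∀ a b, covRel r a b → ¬ chainEdge r ℓ b a :=
    fun a b h h' => h.2.1 (antisymm h.1 h'.1.1)
  refine ⟨p, fun a b h => ?_, fun a b h => ?_⟩
  · have := hp a b (hadj a b h.1)
    simp only [h, hback a b h.1, if_true, if_false] at this
    linarith
  · have hab : ¬ chainEdge r ℓ a b := fun h' => absurd (h.2.symm.trans h'.2) (by decide)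
    have := hp a b (hadj a b h.1)
    simp only [hab, hback a b h.1, if_false, sub_zero] at this
    linarith

variable {v p : Fin d → ℝ} {g : ℝ → ℝ}

lemma sum_sub_periodic_eq_zero_of_isMaxChain [IsPartialOrder (Fin d) r]
    (hchain : ∀ a b, chainEdge r ℓ a b → p b = p a + v b) (hg : Function.Periodic g 1)
    {C : Finset (Fin d)} (hC : IsMaxChain (genOrd (chainEdge r ℓ)) (C : Set (Fin d)))
    (hsum : ∑ i ∈ C, v i = 1) : ∑ i ∈ C, (g (p i) - g (p i - v i)) = 0 := by
  have : IsPartialOrder (Fin d) (genOrd (chainEdge r ℓ)) :=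
    isPartialOrder_reflTransGen fun _ _ h => h.1.1
  have hne : C.Nonempty := nonempty_of_sum_ne_zero (by rw [hsum]; exact one_ne_zero)
  obtain ⟨b, hb, hbC⟩ := hC.1.exists_least_of_finset hne
  obtain ⟨t, ht, htC⟩ := hC.1.exists_greatest_of_finset hne
  have hstep : ∀ x y, covRel (genOrd (chainEdge r ℓ)) y x → p x - v x = p y := fun x y h => by
    rw [hchain y x (rel_of_covRel_reflTransGen (fun a h => h.1.2.1 rfl) h), add_sub_cancel_right]
  have htele : ∀ f : ℝ → ℝ,
      ∑ i ∈ C, (f (p i) - f (p i - v i)) = f (p t) - f (p b - v b) :=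
    fun f => hC.1.sum_sub_eq_of_covRel (F := f ∘ p) (G := fun i => f (p i - v i))
      (fun x y h => by simp only [Function.comp, hstep x y h]) hb hbC
      (fun x hx hxb => hC.exists_covRel hb hbC hx hxb) ht htC
  have hlength : p t = p b - v b + 1 := by
    have := htele id
    simp only [id, sub_sub_cancel] at this
    linarith
  rw [htele g, hlength, hg, sub_self]

lemma eventually_add_smul_mem_orderChainPolytope [IsPartialOrder (Fin d) r]
    (hv : v ∈ orderChainPolytope r ℓ)
    (hchain : ∀ a b, chainEdge r ℓ a b → p b = p a + v b)
    (horder : ∀ a b, orderEdge r ℓ a b → p b = p a) (hg : Function.Periodic g 1) :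
    ∀ᶠ η in 𝓝 (0 : ℝ),
      v + η • (fun i => g (p i) - g (p i - v i)) ∈ orderChainPolytope r ℓ := by
  set w : Fin d → ℝ := fun i => g (p i) - g (p i - v i)
  obtain ⟨⟨hbox, hord⟩, -, hch⟩ := hv
  have hw_int : ∀ i, v i = 0 ∨ v i = 1 → w i = 0 := by
    rintro i (h | h) <;> simp [w, h, hg.sub_eq]
  have hp_const : ∀ i j, genOrd (orderEdge r ℓ) i j → p i = p j := fun i j h => by
    induction h with
    | refl => rfl
    | tail _ hbc ih => exact ih.trans (horder _ _ hbc).symm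
  have hlow : ∀ i, ∀ᶠ η in 𝓝 (0 : ℝ), 0 ≤ v i + η * w i := fun i =>
    (eventually_add_mul_le (c := -v i) (s := -w i) (b := 0) (by linarith [(hbox i).1])
      fun h => by rw [hw_int i (.inl (by linarith)), neg_zero]).mono fun _ h => by linarith
  have hup : ∀ i, ∀ᶠ η in 𝓝 (0 : ℝ), v i + η * w i ≤ 1 := fun i =>
    eventually_add_mul_le (hbox i).2 fun h => hw_int i (.inr h)
  have hmono : ∀ i j, genOrd (orderEdge r ℓ) i j →
      ∀ᶠ η in 𝓝 (0 : ℝ), v j + η * w j ≤ v i + η * w i := fun i j hij =>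
    (eventually_add_mul_le (c := v j - v i) (s := w j - w i) (b := 0)
      (by linarith [hord i j hij])
      fun h => by simp [w, hp_const i j hij, show v j = v i by linarith]).mono
      fun _ h => by linarith
  have hchains : ∀ C : Finset (Fin d), IsMaxChain (genOrd (chainEdge r ℓ)) (C : Set (Fin d)) →
      ∀ᶠ η in 𝓝 (0 : ℝ), ∑ i ∈ C, v i + η * ∑ i ∈ C, w i ≤ 1 := fun C hC =>
    eventually_add_mul_le (hch C hC) (sum_sub_periodic_eq_zero_of_isMaxChain hchain hg hC)
  filter_upwards [eventually_all.2 hlow, eventually_all.2 hup,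
    eventually_all.2 fun i => eventually_all.2 fun j => eventually_imp_distrib_left.2 (hmono i j),
    eventually_all.2 fun C => eventually_imp_distrib_left.2 (hchains C)] with η h0 h1 hO hC
  refine ⟨⟨fun i => ⟨h0 i, h1 i⟩, hO⟩, h0, fun C hmax => ?_⟩
  simpa [sum_add_distrib, mul_sum] using hC C hmax

end OrderChainPolytope

/-- if the Hasse diagram of `P` is a forest, then for every edge
partition `ℓ` every vertex of the order-chain polytope has all coordinates in `{0,1}`. -/
theorem stmt_15 (d : ℕ) (r : Fin d → Fin d → Prop) (hpo : IsPartialOrder (Fin d) r)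
    (hforest : (hasseGraph r).IsAcyclic) (ℓ : Fin d → Fin d → Bool) :
    ∀ v ∈ Set.extremePoints ℝ
        (orderPolytope (genOrd fun a b : Fin d => covRel r a b ∧ ℓ a b = true) ∩
         chainPolytope (genOrd fun a b : Fin d => covRel r a b ∧ ℓ a b = false)),
      ∀ k : Fin d, v k = 0 ∨ v k = 1 := by
  intro v hv k
  by_contra hk
  obtain ⟨hk0, hk1⟩ := not_or.mp hk
  obtain ⟨p, hchain, horder⟩ := exists_stacking_potential hforest ℓ v
  let g : ℝ → ℝ := fun x => if (x : AddCircle (1 : ℝ)) = p k then 1 else 0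
  have hg : Function.Periodic g 1 := fun x => by simp only [g, AddCircle.coe_add_period]
  have hvk : ((p k - v k : ℝ) : AddCircle (1 : ℝ)) ≠ p k := by
    rw [Ne, AddCircle.coe_sub, sub_eq_self,
      AddCircle.coe_eq_zero_iff_of_mem_Ico ⟨(hv.1.1.1 k).1, (hv.1.1.1 k).2.lt_of_ne hk1⟩]
    exact hk0
  refine notMem_extremePoints_of_eventually_add_smul_mem (fun hw => ?_)
    (eventually_add_smul_mem_orderChainPolytope hv.1 hchain horder hg) hv
  have hwk : g (p k) - g (p k - v k) = 0 := congrFun hw k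
  simp only [g, if_pos rfl, if_neg hvk] at hwk
  norm_num at hwk
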